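/- arXiv:1704.00597 — 2 statements merged into one kernel-verified Lean document; each statement's English description precedes it below -/
import Mathlib

section
/- Let q>1 be real, k ≥ 1 rational, δ̃>0, and let f satisfy the hypotheses required for the q-Laplace transform of order k along direction d (holomorphic on D(0,ρ) ∪ U_d, continuous on closure(D(0,ρ)), with ‖f(x)‖ ≤ K·exp( k·log²|x|/(2 log q) + α·log|x| ) on U_d for |x| ≥ ρ and ‖f(x)‖ ≤ K on closure(D(0,ρ))). Then for every σ ≥ 0 and j ∈ ℚ, T^σ σ_q^j ( L^d_{q;1/k} f )(T) = L^d_{q;1/k}( x ↦ ( x^σ/(q^{1/k})^{σ(σ−1)/2} ) σ_q^{j−σ/k} f(x) )(T), for every T ∈ R_{d,δ̃} ∩ D(0,r₁) with 0 < r₁ ≤ q^{(1/2−α)/k}/2. -/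
noncomputable section

open Complex MeasureTheory Set

namespace Paper

/-- The weight `(1+|m|)^μ e^{β|m|}` in the Fourier variable `m`. -/
def mWeight (β μ m : ℝ) : ℝ := (1 + |m|) ^ μ * Real.exp (β * |m|)

/-- The set of weighted values of `h`, whose supremum is the `E_{(β,μ)}`-norm. -/
def EnormSet (β μ : ℝ) (h : ℝ → ℂ) : Set ℝ :=
  {x | ∃ m : ℝ, x = mWeight β μ m * ‖h m‖}

/-- The norm of the Banach space `E_{(β,μ)}`. -/
def Enorm (β μ : ℝ) (h : ℝ → ℂ) : ℝ := sSup (EnormSet β μ h)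

/-- Membership in the Banach space `E_{(β,μ)}`. -/
def MemE (β μ : ℝ) (h : ℝ → ℂ) : Prop := Continuous h ∧ BddAbove (EnormSet β μ h)

/-- Open unbounded sector with vertex `0`, bisecting direction `d` and (half-)opening `op`. -/
def uSector (d op : ℝ) : Set ℂ :=
  {z | ∃ t θ : ℝ, 0 < t ∧ |θ - d| < op ∧ z = (t : ℂ) * Complex.exp (Complex.I * (θ : ℂ))}

/-- Bounded open sector with vertex `0`, direction `d`, opening `op` and radius `r`. -/
def bSector (d op r : ℝ) : Set ℂ :=
  {z | ∃ t θ : ℝ, 0 < t ∧ t < r ∧ |θ - d| < op ∧ z = (t : ℂ) * Complex.exp (Complex.I * (θ : ℂ))}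

/-- `q^x` (real power) viewed as a complex number. -/
def qc (q x : ℝ) : ℂ := ((q ^ x : ℝ) : ℂ)

/-- The weight `exp(-(k/2) log²|τ+δ|/log q - α log|τ+δ|)` (first family). -/
def tauWeight1 (q k α δ : ℝ) (τ : ℂ) : ℝ :=
  Real.exp (-(k / 2) * (Real.log (‖τ + (δ : ℂ)‖)) ^ 2 / Real.log q
    - α * Real.log (‖τ + (δ : ℂ)‖))

/-- The weight `exp(-(k/2) log²|τ|/log q - ν log|τ|)` (second family). -/
def tauWeight2 (q k ν : ℝ) (τ : ℂ) : ℝ :=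
  Real.exp (-(k / 2) * (Real.log (‖τ‖)) ^ 2 / Real.log q - ν * Real.log (‖τ‖))

/-- Weighted values of a function of `(τ,m)` over `Ω × ℝ`. -/
def ExpSet (β μ : ℝ) (w : ℂ → ℝ) (Ω : Set ℂ) (h : ℂ → ℝ → ℂ) : Set ℝ :=
  {x | ∃ τ ∈ Ω, ∃ m : ℝ, x = mWeight β μ m * w τ * ‖h τ m‖}

/-- Norm of the weighted Banach spaces `Exp^q_{(…)}`. -/
def ExpNorm (β μ : ℝ) (w : ℂ → ℝ) (Ω : Set ℂ) (h : ℂ → ℝ → ℂ) : ℝ := sSup (ExpSet β μ w Ω h)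

/-- Membership in the weighted Banach spaces `Exp^q_{(…)}`: continuity on `Ω × ℝ`,
holomorphy in `τ` on the open part `Ωo`, and finiteness of the weighted sup. -/
def MemExp (β μ : ℝ) (w : ℂ → ℝ) (Ω Ωo : Set ℂ) (h : ℂ → ℝ → ℂ) : Prop :=
  ContinuousOn (fun p : ℂ × ℝ => h p.1 p.2) (Ω ×ˢ (univ : Set ℝ)) ∧
  (∀ m : ℝ, DifferentiableOn ℂ (fun τ => h τ m) Ωo) ∧
  BddAbove (ExpSet β μ w Ω h)

/-- The convolution `f ⋆^P g (m) = ∫ f(m-m₁) P(im₁) g(m₁) dm₁`. -/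
def starQ (P : Polynomial ℂ) (f g : ℝ → ℂ) (m : ℝ) : ℂ :=
  ∫ m₁ : ℝ, f (m - m₁) * P.eval (Complex.I * (m₁ : ℂ)) * g m₁

/-- The `q`-convolution of order `k`:
`φ_k ⋆^P_{q;1/k} f = Σ_{h=0}^{p₁} τ^h/(q^{1/k})^{h(h-1)/2} ( c_h ⋆^P σ_{q,τ}^{-h/k} f )`. -/
def qConv (q k : ℝ) (p₁ : ℕ) (P : Polynomial ℂ) (c : ℕ → ℝ → ℂ) (f : ℂ → ℝ → ℂ)
    (τ : ℂ) (m : ℝ) : ℂ :=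
  ∑ h ∈ Finset.range (p₁ + 1),
    (τ ^ h / qc q (((h : ℝ) * ((h : ℝ) - 1)) / (2 * k))) *
      starQ P (c h) (fun m₁ => f (τ / qc q ((h : ℝ) / k)) m₁) m

/-- The Jacobi theta function `Θ_{q^{1/k}}(x) = Σ_{n ∈ ℤ} q^{-n(n-1)/(2k)} x^n`. -/
def theta (q k : ℝ) (x : ℂ) : ℂ :=
  ∑' n : ℤ, qc q (-(((n : ℝ) * ((n : ℝ) - 1)) / (2 * k))) * x ^ n

/-- The constant `π_{q^{1/k}} = (log q / k) Π_{n≥0} (1 - q^{-(n+1)/k})⁻¹`. -/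
def piq (q k : ℝ) : ℝ := (Real.log q / k) * ∏' n : ℕ, (1 - q ^ (-(((n : ℝ) + 1) / k)))⁻¹

/-- The point `t e^{i d}` of the half-line `L_d`. -/
def ray (d t : ℝ) : ℂ := (t : ℂ) * Complex.exp (Complex.I * (d : ℂ))

/-- The `q`-Laplace transform of order `k` along direction `d`:
`L^d_{q;1/k}(f)(T) = (1/π_{q^{1/k}}) ∫_{L_d} f(u)/Θ_{q^{1/k}}(u/T) du/u`. -/
def qLaplace {E : Type*} [NormedAddCommGroup E] [NormedSpace ℂ E]
    (q k d : ℝ) (f : ℂ → E) (T : ℂ) : E :=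
  ∫ t in Set.Ioi (0 : ℝ), (((piq q k : ℂ) * theta q k (ray d t / T) * (t : ℂ))⁻¹) • f (ray d t)

/-- The domain `R_{d,δ̃} = {T ≠ 0 : |1 + re^{id}/T| > δ̃ for all r ≥ 0}`. -/
def Rset (d δt : ℝ) : Set ℂ :=
  {T | T ≠ 0 ∧ ∀ r : ℝ, 0 ≤ r → δt < ‖1 + ray d r / T‖}

/-- The inverse Fourier transform `F⁻¹(g)(z) = (2π)^{-1/2} ∫ g(m) e^{izm} dm`. -/
def invFourier (g : ℝ → ℂ) (z : ℂ) : ℂ :=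
  (Real.sqrt (2 * Real.pi))⁻¹ * ∫ m : ℝ, g m * Complex.exp (Complex.I * z * (m : ℂ))

/-- The differential operator `P(∂_z)` applied to a function of `z`. -/
def Pdz (P : Polynomial ℂ) (f : ℂ → ℂ) (z : ℂ) : ℂ :=
  ∑ i ∈ Finset.range (P.natDegree + 1), P.coeff i * iteratedDeriv i f z

/-- The horizontal strip `H_b = {z : |Im z| < b}`. -/
def Hstrip (b : ℝ) : Set ℂ := {z | |z.im| < b}

/-- Good covering `(ℰ_p)_{0 ≤ p ≤ ς-1}` of the punctured neighbourhood of the origin. -/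
def IsGoodCovering (ς : ℕ) (ε₀ : ℝ) (E : ℕ → Set ℂ) : Prop :=
  2 ≤ ς ∧ 0 < ε₀ ∧
  (∀ p < ς, ∃ d op : ℝ, 0 < op ∧ E p = bSector d op ε₀) ∧
  (∀ j < ς, ∀ k < ς, (E j ∩ E k).Nonempty ↔ (j = k ∨ (j + 1) % ς = k ∨ (k + 1) % ς = j)) ∧
  (∃ U : Set ℂ, U ∈ nhds (0 : ℂ) ∧ (⋃ p ∈ Finset.range ς, E p) = U \ {0})

/-- `f : V → F` admits `Σ c_n ε^n` as `q`-Gevrey asymptotic expansion of order `1/k` on `V`. -/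
def HasQExp {F : Type*} [NormedAddCommGroup F] [NormedSpace ℂ F]
    (q k : ℝ) (V : Set ℂ) (f : ℂ → F) (c : ℕ → F) : Prop :=
  ∀ d op r : ℝ, 0 < op → 0 < r → closure (bSector d op r) \ {0} ⊆ V →
    ∃ A C : ℝ, 0 < A ∧ 0 < C ∧ ∀ ε ∈ bSector d op r, ∀ N : ℕ,
      ‖f ε - ∑ n ∈ Finset.range (N + 1), ε ^ n • c n‖
        ≤ C * A ^ (N + 1) * q ^ (((N : ℝ) * ((N : ℝ) + 1)) / (2 * k)) * ‖ε‖ ^ (N + 1)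

/-- `q`-Gevrey asymptotic expansion of order `1/k`, for functions with values in the Banach
space `𝔽` of bounded holomorphic functions on `T × H` (sup-norm expressed pointwise). -/
def HasQExpPt (q k : ℝ) (V T H : Set ℂ)
    (f : ℂ → ℂ → ℂ → ℂ) (c : ℕ → ℂ → ℂ → ℂ) : Prop :=
  ∀ d op r : ℝ, 0 < op → 0 < r → closure (bSector d op r) \ {0} ⊆ V →
    ∃ A C : ℝ, 0 < A ∧ 0 < C ∧ ∀ ε ∈ bSector d op r, ∀ N : ℕ, ∀ t ∈ T, ∀ z ∈ H,
      ‖f t z ε - ∑ n ∈ Finset.range (N + 1), c n t z * ε ^ n‖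
        ≤ C * A ^ (N + 1) * q ^ (((N : ℝ) * ((N : ℝ) + 1)) / (2 * k)) * ‖ε‖ ^ (N + 1)

/-- The roots `q_ℓ(m)` of the polynomial `P_{m,1}`. -/
def qroot1 (q : ℝ) (k₁ dD1 : ℕ) (Qp RD1 : Polynomial ℂ) (ℓ : ℕ) (m : ℝ) : ℂ :=
  Complex.exp (2 * (Real.pi : ℂ) * Complex.I * (ℓ : ℂ) / (dD1 : ℂ)) *
    (Qp.eval (Complex.I * (m : ℂ)) / RD1.eval (Complex.I * (m : ℂ))) ^ ((1 : ℂ) / (dD1 : ℂ)) *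
    qc q (((dD1 : ℝ) + 2 * (k₁ : ℝ) - 1) / (2 * (k₁ : ℝ)))

/-- Membership in the unbounded sector `{z : |z| ≥ r, |arg z - dd| ≤ νν}`. -/
def inSectorGE (dd νν r : ℝ) (z : ℂ) : Prop :=
  r ≤ ‖z‖ ∧
    ∃ θ : ℝ, |θ - dd| ≤ νν ∧ z = ((‖z‖ : ℝ) : ℂ) * Complex.exp (Complex.I * (θ : ℂ))

/-- The main `q`-difference-differential equation, at the point `(t,z,ε)`. -/
def mainEq (q : ℝ) (k₁ k₂ : ℕ) (dD1 dD2 D : ℕ) (d δ' Δ : ℕ → ℕ)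
    (Qp RD1 RD2 : Polynomial ℂ) (Rl : ℕ → Polynomial ℂ)
    (c : ℕ → ℂ → ℂ → ℂ → ℂ) (f : ℂ → ℂ → ℂ → ℂ) (u : ℂ → ℂ → ℂ → ℂ)
    (t z ε : ℂ) : Prop :=
  Pdz Qp (fun z' => u ((q : ℂ) * t) z' ε) z
    = (ε * t) ^ dD1 * Pdz RD1 (fun z' => u (qc q ((dD1 : ℝ) / (k₁ : ℝ) + 1) * t) z' ε) z
    + (ε * t) ^ dD2 * Pdz RD2 (fun z' => u (qc q ((dD2 : ℝ) / (k₂ : ℝ) + 1) * t) z' ε) z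
    + ∑ ℓ ∈ Finset.Icc 1 (D - 1),
        ε ^ (Δ ℓ) * t ^ (d ℓ) *
          (c ℓ (qc q (δ' ℓ) * t) z ε * Pdz (Rl ℓ) (fun z' => u (qc q (δ' ℓ) * t) z' ε) z)
    + f ((q : ℂ) * t) z ε

/-- The first auxiliary equation in the `q`-Borel plane of order `k₁` (equation (23)). -/
def borelEq1 (q : ℝ) (k₁ k₂ : ℕ) (D p₁ : ℕ) (dD1 dD2 : ℕ) (d δ' Δ : ℕ → ℕ)
    (Qp RD1 RD2 : Polynomial ℂ) (Rl : ℕ → Polynomial ℂ)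
    (C : ℕ → ℕ → ℝ → ℂ) (Ψ : ℂ → ℝ → ℂ) (ε : ℂ)
    (w : ℂ → ℝ → ℂ) (τ : ℂ) (m : ℝ) : Prop :=
  Qp.eval (Complex.I * (m : ℂ)) *
      (τ ^ k₁ / qc q (((k₁ : ℝ) * ((k₁ : ℝ) - 1)) / (2 * (k₁ : ℝ)))) * w τ m
    = RD1.eval (Complex.I * (m : ℂ)) *
        (τ ^ (dD1 + k₁) /
          qc q ((((dD1 : ℝ) + (k₁ : ℝ)) * ((dD1 : ℝ) + (k₁ : ℝ) - 1)) / (2 * (k₁ : ℝ)))) * w τ m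
    + RD2.eval (Complex.I * (m : ℂ)) *
        (τ ^ (dD2 + k₁) /
          qc q ((((dD2 : ℝ) + (k₁ : ℝ)) * ((dD2 : ℝ) + (k₁ : ℝ) - 1)) / (2 * (k₁ : ℝ)))) *
        w (qc q ((dD2 : ℝ) * (1 / (k₂ : ℝ) - 1 / (k₁ : ℝ))) * τ) m
    + (τ ^ k₁ / qc q (((k₁ : ℝ) * ((k₁ : ℝ) - 1)) / (2 * (k₁ : ℝ)))) * Ψ τ m
    + ∑ ℓ ∈ Finset.Icc 1 (D - 1),
        ε ^ (Δ ℓ - d ℓ) *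
          (τ ^ (d ℓ + k₁) /
            qc q ((((d ℓ : ℝ) + (k₁ : ℝ)) * ((d ℓ : ℝ) + (k₁ : ℝ) - 1)) / (2 * (k₁ : ℝ)))) *
          (((Real.sqrt (2 * Real.pi) : ℝ) : ℂ)⁻¹ *
            qConv q (k₁ : ℝ) p₁ (Rl ℓ) (C ℓ)
              w (qc q ((δ' ℓ : ℝ) - (d ℓ : ℝ) / (k₁ : ℝ) - 1) * τ) m)

/-- The second auxiliary equation in the `q`-Borel plane of order `k₂` (equation (33)). -/
def borelEq2 (q : ℝ) (k₁ k₂ : ℕ) (D p₁ : ℕ) (dD1 dD2 : ℕ) (d δ' Δ : ℕ → ℕ)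
    (Qp RD1 RD2 : Polynomial ℂ) (Rl : ℕ → Polynomial ℂ)
    (C : ℕ → ℕ → ℝ → ℂ) (Ψ₂ : ℂ → ℝ → ℂ) (ε : ℂ)
    (w : ℂ → ℝ → ℂ) (τ : ℂ) (m : ℝ) : Prop :=
  Qp.eval (Complex.I * (m : ℂ)) *
      (τ ^ k₂ / qc q (((k₂ : ℝ) * ((k₂ : ℝ) - 1)) / (2 * (k₂ : ℝ)))) * w τ m
    = RD1.eval (Complex.I * (m : ℂ)) *
        (τ ^ (dD1 + k₂) /
          qc q ((((dD1 : ℝ) + (k₂ : ℝ)) * ((dD1 : ℝ) + (k₂ : ℝ) - 1)) / (2 * (k₂ : ℝ)))) *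
        w (qc q ((dD1 : ℝ) * (1 / (k₁ : ℝ) - 1 / (k₂ : ℝ))) * τ) m
    + RD2.eval (Complex.I * (m : ℂ)) *
        (τ ^ (dD2 + k₂) /
          qc q ((((dD2 : ℝ) + (k₂ : ℝ)) * ((dD2 : ℝ) + (k₂ : ℝ) - 1)) / (2 * (k₂ : ℝ)))) * w τ m
    + (τ ^ k₂ / qc q (((k₂ : ℝ) * ((k₂ : ℝ) - 1)) / (2 * (k₂ : ℝ)))) * Ψ₂ τ m
    + ∑ ℓ ∈ Finset.Icc 1 (D - 1),
        ε ^ (Δ ℓ - d ℓ) *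
          (τ ^ (d ℓ + k₂) /
            qc q ((((d ℓ : ℝ) + (k₂ : ℝ)) * ((d ℓ : ℝ) + (k₂ : ℝ) - 1)) / (2 * (k₂ : ℝ)))) *
          (((Real.sqrt (2 * Real.pi) : ℝ) : ℂ)⁻¹ *
            qConv q (k₂ : ℝ) p₁ (Rl ℓ) (C ℓ)
              w (qc q ((δ' ℓ : ℝ) - (d ℓ : ℝ) / (k₂ : ℝ) - 1) * τ) m)


/-! The theta functional equation `Θ(x) = x^σ q^{-σ(σ-1)/(2k)} Θ(q^{-σ/k} x)` absorbs the
factor `x^σ / (q^{1/k})^{σ(σ-1)/2}` of the integrand into the dilation `T ↦ q^{σ/k} T`, and the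
substitution `t ↦ c t` along the ray `L_d` trades the dilation `σ_q^{j-σ/k}` of `f` for the
dilation `T ↦ q^{j-σ/k} T`; the two dilations compose to `σ_q^j`. -/

lemma qc_ne_zero {q : ℝ} (hq : 0 < q) (a : ℝ) : qc q a ≠ 0 :=
  Complex.ofReal_ne_zero.mpr (Real.rpow_pos_of_pos hq a).ne'

lemma qc_add {q : ℝ} (hq : 0 < q) (a b : ℝ) : qc q (a + b) = qc q a * qc q b := by
  simp [qc, Real.rpow_add hq]

lemma qc_neg {q : ℝ} (hq : 0 < q) (a : ℝ) : qc q (-a) = (qc q a)⁻¹ := by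
  simp [qc, Real.rpow_neg hq.le]

lemma qc_zpow {q : ℝ} (hq : 0 < q) (a : ℝ) (n : ℤ) : qc q a ^ n = qc q (a * n) := by
  rw [qc, ← Complex.ofReal_zpow, ← Real.rpow_intCast, ← Real.rpow_mul hq.le, qc]

lemma theta_eq_zpow_mul_theta {q : ℝ} (hq : 0 < q) (k : ℝ) (σ : ℤ) {x : ℂ} (hx : x ≠ 0) :
    theta q k x = (x ^ σ / qc q ((σ : ℝ) * ((σ : ℝ) - 1) / (2 * k))) *
      theta q k (qc q (-((σ : ℝ) / k)) * x) := by
  unfold theta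
  rw [← tsum_mul_left, ← (Equiv.addRight σ).tsum_eq]
  refine tsum_congr fun n => ?_
  have hexp : -(((n + σ : ℤ) : ℝ) * (((n + σ : ℤ) : ℝ) - 1) / (2 * k))
      = -((σ : ℝ) * ((σ : ℝ) - 1) / (2 * k)) +
        (-((n : ℝ) * ((n : ℝ) - 1) / (2 * k)) + -((σ : ℝ) / k) * n) := by
    push_cast
    ring
  rw [Equiv.coe_addRight, hexp, qc_add hq, qc_add hq, ← qc_zpow hq, qc_neg hq, mul_zpow,
    zpow_add₀ hx]
  ring

lemma ray_mul (d c t : ℝ) : ray d (c * t) = c * ray d t := by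
  simp only [ray, Complex.ofReal_mul]
  ring

lemma ray_ne_zero (d : ℝ) {t : ℝ} (ht : t ≠ 0) : ray d t ≠ 0 :=
  mul_ne_zero (Complex.ofReal_ne_zero.mpr ht) (Complex.exp_ne_zero _)

section

variable {E : Type*} [NormedAddCommGroup E] [NormedSpace ℂ E]

lemma qLaplace_comp_mul (q k d : ℝ) {c : ℝ} (hc : 0 < c) (f : ℂ → E) (T : ℂ) :
    qLaplace q k d (fun x => f (c * x)) T = qLaplace q k d f (c * T) := by
  unfold qLaplace
  conv_rhs => rw [← mul_zero c, ← integral_comp_mul_left_Ioi' _ 0 hc, ← integral_smul]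
  refine setIntegral_congr_fun measurableSet_Ioi fun t _ => ?_
  have hc' : (c : ℂ) ≠ 0 := Complex.ofReal_ne_zero.mpr hc.ne'
  rw [← Complex.coe_smul, smul_smul, ray_mul, Complex.ofReal_mul, mul_div_mul_left _ _ hc',
    mul_inv _ ((c : ℂ) * t), mul_inv (c : ℂ)]
  congr 1
  field_simp

lemma qLaplace_zpow_smul {q : ℝ} (hq : 0 < q) (k d : ℝ) (σ : ℤ) (f : ℂ → E) {T : ℂ}
    (hT : T ≠ 0) :
    qLaplace q k d (fun x => (x ^ σ / qc q ((σ : ℝ) * ((σ : ℝ) - 1) / (2 * k))) • f x) T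
      = T ^ σ • qLaplace q k d f (qc q ((σ : ℝ) / k) * T) := by
  unfold qLaplace
  rw [← integral_smul]
  refine setIntegral_congr_fun measurableSet_Ioi fun t ht => ?_
  have hx : ray d t / T ≠ 0 := div_ne_zero (ray_ne_zero d (ne_of_gt ht)) hT
  have harg : qc q (-((σ : ℝ) / k)) * (ray d t / T) = ray d t / (qc q ((σ : ℝ) / k) * T) := by
    rw [qc_neg hq]
    field_simp
  rw [theta_eq_zpow_mul_theta hq k σ hx, harg, smul_smul, smul_smul]
  congr 1
  simp only [mul_inv, div_zpow]
  field_simp [qc_ne_zero hq, ray_ne_zero d (ne_of_gt ht)]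

end

theorem statement5_general {E : Type*} [NormedAddCommGroup E] [NormedSpace ℂ E]
    (q : ℝ) (hq : 1 < q) (k : ℚ) (δt : ℝ) (d : ℝ) (f : ℂ → E) (α : ℝ) (σ : ℕ) (j : ℚ) :
    ∀ r₁ : ℝ, 0 < r₁ → r₁ ≤ q ^ ((1 / 2 - α) / (k : ℝ)) / 2 →
      ∀ T ∈ Rset d δt ∩ Metric.ball (0 : ℂ) r₁,
        (T ^ σ) • qLaplace q (k : ℝ) d f (qc q (j : ℝ) * T)
          = qLaplace q (k : ℝ) d
              (fun x =>
                (x ^ σ / qc q (((σ : ℝ) * ((σ : ℝ) - 1)) / (2 * (k : ℝ)))) •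
                  f (qc q ((j : ℝ) - (σ : ℝ) / (k : ℝ)) * x)) T := by
  rintro - - - T ⟨⟨hT, -⟩, -⟩
  have hq₀ : 0 < q := zero_lt_one.trans hq
  set c : ℝ := (j : ℝ) - σ / k
  have hdilate : qLaplace q k d (fun x => f (qc q c * x)) (qc q ((σ : ℝ) / k) * T)
      = qLaplace q k d f (qc q c * (qc q ((σ : ℝ) / k) * T)) :=
    qLaplace_comp_mul q k d (Real.rpow_pos_of_pos hq₀ c) f _
  have hmonomial := qLaplace_zpow_smul hq₀ k d σ (fun x => f (qc q c * x)) hT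
  simp only [Int.cast_natCast, zpow_natCast] at hmonomial
  rw [hmonomial, hdilate, ← mul_assoc, ← qc_add hq₀, sub_add_cancel]

/-- commutation of `T^σ σ_q^j` with the `q`-Laplace transform of order `k`:
`T^σ σ_q^j (L^d_{q;1/k} f)(T) = L^d_{q;1/k}( x^σ/(q^{1/k})^{σ(σ-1)/2} σ_q^{j-σ/k} f )(T)`. -/
theorem statement5 {E : Type*} [NormedAddCommGroup E] [NormedSpace ℂ E]
    (q : ℝ) (hq : 1 < q) (k : ℚ) (hk : 1 ≤ k) (δt : ℝ) (hδt : 0 < δt)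
    (ρ : ℝ) (hρ : 0 < ρ) (d op : ℝ) (hop : 0 < op)
    (f : ℂ → E)
    (hf : DifferentiableOn ℂ f (Metric.ball 0 ρ ∪ uSector d op))
    (hfc : ContinuousOn f (Metric.closedBall 0 ρ))
    (K α : ℝ) (hK : 0 < K)
    (hgrowth : ∀ x ∈ uSector d op, ρ ≤ ‖x‖ →
      ‖f x‖ ≤ K * Real.exp ((k : ℝ) * (Real.log (‖x‖)) ^ 2 / (2 * Real.log q)
        + α * Real.log (‖x‖)))
    (hbdd : ∀ x ∈ Metric.closedBall (0 : ℂ) ρ, ‖f x‖ ≤ K)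
    (hd : ∀ t : ℝ, 0 < t → ray d t ∈ Metric.ball 0 ρ ∪ uSector d op)
    (σ : ℕ) (j : ℚ) :
    ∀ r₁ : ℝ, 0 < r₁ → r₁ ≤ q ^ ((1 / 2 - α) / (k : ℝ)) / 2 →
      ∀ T ∈ Rset d δt ∩ Metric.ball (0 : ℂ) r₁,
        (T ^ σ) • qLaplace q (k : ℝ) d f (qc q (j : ℝ) * T)
          = qLaplace q (k : ℝ) d
              (fun x =>
                (x ^ σ / qc q (((σ : ℝ) * ((σ : ℝ) - 1)) / (2 * (k : ℝ)))) •
                  f (qc q ((j : ℝ) - (σ : ℝ) / (k : ℝ)) * x)) T :=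
  statement5_general q hq k δt d f α σ j

end Paper
end
end

section
/- Let (𝔽, ‖·‖_𝔽) be a complex Banach space, q>1 real, k a positive integer, and V a bounded open sector with vertex 0 in ℂ. A holomorphic function f: V → 𝔽 admits the null formal power series 0̂ ∈ 𝔽[[ε]] as its q-Gevrey asymptotic expansion of order 1/k if and only if for every open subsector U with closure(U)∖{0} ⊆ V there exist constants K₁ ∈ ℝ and K₂ > 0 with ‖f(ε)‖_𝔽 ≤ K₂ exp( −k·log²|ε|/(2 log q) ) |ε|^{K₁} for all ε ∈ U. -/
noncomputable section

open Complex MeasureTheory Set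

namespace Paper

/-!
Write `B = log q / (2k)` and `L = log |ε|`. For a fixed `N`, the Gevrey bound
`C A^{N+1} q^{N(N+1)/(2k)} |ε|^{N+1}` is `C exp(B n² + n (log A + L - B))` with `n = N + 1`, a
quadratic in `n` whose minimum over real `n` is `-L²/(4B) + K₁ L + const`, and
`exp(-L²/(4B)) = exp(-k log²|ε| / (2 log q))`. Choosing `N` near the minimiser gives the flat bound;
conversely, the minimum lies below the value at every `n`, so the flat bound is dominated by every
Gevrey term.
-/

lemma norm_pos_and_lt_of_mem_bSector {d op r : ℝ} {ε : ℂ} (h : ε ∈ bSector d op r) :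
    0 < ‖ε‖ ∧ ‖ε‖ < r := by
  obtain ⟨t, θ, ht, htr, -, rfl⟩ := h
  rw [norm_mul, Complex.norm_exp_I_mul_ofReal, mul_one, Complex.norm_real,
    Real.norm_of_nonneg ht.le]
  exact ⟨ht, htr⟩

lemma exists_nat_abs_add_one_sub_le {x₀ x : ℝ} (h : x₀ ≤ x) :
    ∃ N : ℕ, |(N : ℝ) + 1 - x| ≤ 1 + |x₀| := by
  refine ⟨⌊x⌋₊, abs_le.mpr ⟨?_, ?_⟩⟩
  · linarith [Nat.lt_floor_add_one x, abs_nonneg x₀]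
  · rcases le_total 0 x with hx | hx
    · linarith [Nat.floor_le hx, abs_nonneg x₀]
    · rw [Nat.floor_of_nonpos hx, Nat.cast_zero]
      linarith [neg_abs_le x₀]

/-- The witnesses come from completing the square `B n² + n (a + L - B) = B (n - n*)² - B n*²` at
`n* = (B - a - L)/(2B)`, with `n = N + 1` at distance at most `1 + |n*(L₀)|` from `n*`. -/
lemma exists_nat_quadratic_le {B : ℝ} (hB : 0 < B) (a L₀ : ℝ) :
    ∃ K₁ c : ℝ, ∀ L ≤ L₀, ∃ N : ℕ,
      ((N : ℝ) + 1) * (a + L) + N * (N + 1) * B ≤ c + (-L ^ 2 / (4 * B) + K₁ * L) := by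
  refine ⟨(B - a) / (2 * B), B * (1 + |(B - a - L₀) / (2 * B)|) ^ 2 - (B - a) ^ 2 / (4 * B),
    fun L hL => ?_⟩
  have hmin : (B - a - L₀) / (2 * B) ≤ (B - a - L) / (2 * B) := by gcongr
  obtain ⟨N, hN⟩ := exists_nat_abs_add_one_sub_le hmin
  refine ⟨N, ?_⟩
  have hsq : B * ((N : ℝ) + 1 - (B - a - L) / (2 * B)) ^ 2
      ≤ B * (1 + |(B - a - L₀) / (2 * B)|) ^ 2 := by
    rw [← sq_abs]
    gcongr
  have hsquare : ((N : ℝ) + 1) * (a + L) + N * (N + 1) * B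
      = B * ((N : ℝ) + 1 - (B - a - L) / (2 * B)) ^ 2 - (B - a) ^ 2 / (4 * B)
        + (-L ^ 2 / (4 * B) + (B - a) / (2 * B) * L) := by
    field_simp
    ring
  linarith

lemma neg_sq_div_add_le_quadratic {B : ℝ} (hB : 0 < B) (K₁ L : ℝ) (N : ℕ) :
    -L ^ 2 / (4 * B) + K₁ * L
      ≤ K₁ ^ 2 * B + ((N : ℝ) + 1) * ((1 - 2 * K₁) * B + L) + N * (N + 1) * B := by
  have hsquare : K₁ ^ 2 * B + ((N : ℝ) + 1) * ((1 - 2 * K₁) * B + L) + N * (N + 1) * B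
      - (-L ^ 2 / (4 * B) + K₁ * L) = (L + 2 * B * ((N : ℝ) + 1 - K₁)) ^ 2 / (4 * B) := by
    field_simp
    ring
  have : 0 ≤ (L + 2 * B * ((N : ℝ) + 1 - K₁)) ^ 2 / (4 * B) := by positivity
  linarith

lemma gevrey_term_eq_exp {q k A C x : ℝ} (hq : 0 < q) (hA : 0 < A) (hx : 0 < x) (N : ℕ) :
    C * A ^ (N + 1) * q ^ (((N : ℝ) * ((N : ℝ) + 1)) / (2 * k)) * x ^ (N + 1)
      = C * Real.exp (((N : ℝ) + 1) * (Real.log A + Real.log x)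
          + N * (N + 1) * (Real.log q / (2 * k))) := by
  have hpow :
      A ^ (N + 1) * x ^ (N + 1) = Real.exp (((N : ℝ) + 1) * (Real.log A + Real.log x)) := by
    rw [← Real.log_mul hA.ne' hx.ne', ← mul_pow, ← Nat.cast_add_one, Real.exp_nat_mul,
      Real.exp_log (mul_pos hA hx)]
  rw [Real.exp_add, ← hpow, Real.rpow_def_of_pos hq]
  ring_nf

lemma flat_weight_eq_exp {q k K₁ K₂ x : ℝ} (hq : 1 < q) (hx : 0 < x) :
    K₂ * Real.exp (-k * Real.log x ^ 2 / (2 * Real.log q)) * x ^ K₁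
      = K₂ * Real.exp (-Real.log x ^ 2 / (4 * (Real.log q / (2 * k))) + K₁ * Real.log x) := by
  have hlogq : Real.log q ≠ 0 := (Real.log_pos hq).ne'
  rw [Real.rpow_def_of_pos hx, mul_assoc, ← Real.exp_add]
  congr 2
  field_simp
  ring

lemma exists_flat_bound_of_gevrey_bound {q k A C r : ℝ} (hq : 1 < q) (hk : 0 < k) (hA : 0 < A)
    (hC : 0 < C) :
    ∃ K₁ K₂ : ℝ, 0 < K₂ ∧ ∀ x, 0 < x → x ≤ r → ∃ N : ℕ,
      C * A ^ (N + 1) * q ^ (((N : ℝ) * ((N : ℝ) + 1)) / (2 * k)) * x ^ (N + 1)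
        ≤ K₂ * Real.exp (-k * Real.log x ^ 2 / (2 * Real.log q)) * x ^ K₁ := by
  have hB : 0 < Real.log q / (2 * k) := by have := Real.log_pos hq; positivity
  obtain ⟨K₁, c, hquad⟩ := exists_nat_quadratic_le hB (Real.log A) (Real.log r)
  refine ⟨K₁, C * Real.exp c, by positivity, fun x hx hxr => ?_⟩
  obtain ⟨N, hN⟩ := hquad (Real.log x) (Real.log_le_log hx hxr)
  refine ⟨N, ?_⟩
  rw [gevrey_term_eq_exp (by linarith) hA hx, flat_weight_eq_exp hq hx, mul_assoc C,
    ← Real.exp_add]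
  gcongr

lemma exists_gevrey_bound_of_flat_bound {q k K₁ K₂ : ℝ} (hq : 1 < q) (hk : 0 < k)
    (hK₂ : 0 < K₂) :
    ∃ A C : ℝ, 0 < A ∧ 0 < C ∧ ∀ x, 0 < x → ∀ N : ℕ,
      K₂ * Real.exp (-k * Real.log x ^ 2 / (2 * Real.log q)) * x ^ K₁
        ≤ C * A ^ (N + 1) * q ^ (((N : ℝ) * ((N : ℝ) + 1)) / (2 * k)) * x ^ (N + 1) := by
  have hB : 0 < Real.log q / (2 * k) := by have := Real.log_pos hq; positivity
  refine ⟨Real.exp ((1 - 2 * K₁) * (Real.log q / (2 * k))),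
    K₂ * Real.exp (K₁ ^ 2 * (Real.log q / (2 * k))), Real.exp_pos _, by positivity,
    fun x hx N => ?_⟩
  rw [gevrey_term_eq_exp (by linarith) (Real.exp_pos _) hx, flat_weight_eq_exp hq hx, Real.log_exp,
    mul_assoc K₂, ← Real.exp_add]
  gcongr ?_ * Real.exp ?_
  linarith [neg_sq_div_add_le_quadratic hB K₁ (Real.log x) N]

theorem statement15_general {F : Type*} [NormedAddCommGroup F] [NormedSpace ℂ F]
    (q : ℝ) (hq : 1 < q) (k : ℕ) (hk : 0 < k)
    (d₀ op₀ r₀ : ℝ) (f : ℂ → F) :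
    HasQExp q (k : ℝ) (bSector d₀ op₀ r₀) f (fun _ => 0) ↔
      ∀ d op r : ℝ, 0 < op → 0 < r →
        closure (bSector d op r) \ {0} ⊆ bSector d₀ op₀ r₀ →
        ∃ K₁ : ℝ, ∃ K₂ : ℝ, 0 < K₂ ∧ ∀ ε ∈ bSector d op r,
          ‖f ε‖ ≤ K₂ * Real.exp (-(k : ℝ) * (Real.log (‖ε‖)) ^ 2 / (2 * Real.log q)) *
            ‖ε‖ ^ K₁ := by
  have hk' : (0 : ℝ) < k := Nat.cast_pos.mpr hk
  simp only [HasQExp, smul_zero, Finset.sum_const_zero, sub_zero]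
  refine ⟨fun h d op r hop hr hV => ?_, fun h d op r hop hr hV => ?_⟩
  · obtain ⟨A, C, hA, hC, hgevrey⟩ := h d op r hop hr hV
    obtain ⟨K₁, K₂, hK₂, hdom⟩ := exists_flat_bound_of_gevrey_bound (r := r) hq hk' hA hC
    refine ⟨K₁, K₂, hK₂, fun ε hε => ?_⟩
    obtain ⟨hε₀, hεr⟩ := norm_pos_and_lt_of_mem_bSector hε
    obtain ⟨N, hN⟩ := hdom ‖ε‖ hε₀ hεr.le
    exact (hgevrey ε hε N).trans hN
  · obtain ⟨K₁, K₂, hK₂, hflat⟩ := h d op r hop hr hV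
    obtain ⟨A, C, hA, hC, hdom⟩ := exists_gevrey_bound_of_flat_bound (K₁ := K₁) hq hk' hK₂
    refine ⟨A, C, hA, hC, fun ε hε N => ?_⟩
    exact (hflat ε hε).trans (hdom ‖ε‖ (norm_pos_and_lt_of_mem_bSector hε).1 N)

/-- characterization of functions with null `q`-Gevrey asymptotic expansion of
order `1/k` (Lemma 20 of the paper). -/
theorem statement15 {F : Type*} [NormedAddCommGroup F] [NormedSpace ℂ F]
    (q : ℝ) (hq : 1 < q) (k : ℕ) (hk : 0 < k)
    (d₀ op₀ r₀ : ℝ) (hop₀ : 0 < op₀) (hr₀ : 0 < r₀)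
    (f : ℂ → F) (hf : DifferentiableOn ℂ f (bSector d₀ op₀ r₀)) :
    HasQExp q (k : ℝ) (bSector d₀ op₀ r₀) f (fun _ => 0) ↔
      ∀ d op r : ℝ, 0 < op → 0 < r →
        closure (bSector d op r) \ {0} ⊆ bSector d₀ op₀ r₀ →
        ∃ K₁ : ℝ, ∃ K₂ : ℝ, 0 < K₂ ∧ ∀ ε ∈ bSector d op r,
          ‖f ε‖ ≤ K₂ * Real.exp (-(k : ℝ) * (Real.log (‖ε‖)) ^ 2 / (2 * Real.log q)) *
            ‖ε‖ ^ K₁ :=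
  statement15_general q hq k hk d₀ op₀ r₀ f

end Paper
end
end
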